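/- Let (μ_λ)_{λ∈Λ} be a measurable family of Borel regular outer measures on ℝ^n. Then: (i) 𝓘^m_1(E) = inf{ ∫_Λ μ_λ(B) dλ : B Borel, E ⊂ B } for every E ⊂ ℝ^n; (ii) 𝓘̂_m(B × U) ≤ ∫_U μ_λ(B) dλ for every Borel B ⊂ ℝ^n and every Borel U ⊂ Λ; (iii) 𝓘^m_1(B) = ζ_1(B) = ∫_Λ μ_λ(B) dλ for every Borel B ⊂ ℝ^n. -/

import Mathlib

open MeasureTheory Metric Set Filter
open scoped ENNReal NNReal Topology

noncomputable section

abbrev Euc (n : ℕ) : Type := EuclideanSpace ℝ (Fin n)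

namespace Slicing

variable {n m l : ℕ}

/-- The map `T_{x x'}(λ) = (P_λ(x) - P_λ(x'))/|x - x'|`. -/
def transMap (P : Euc n → Euc l → Euc m) (x x' : Euc n) (lam : Euc l) : Euc m :=
  ‖x - x'‖⁻¹ • (P x lam - P x' lam)

/-- The `m`-dimensional Jacobian `J D = √det(D ∘ Dᵀ)` of a linear map `D : ℝˡ → ℝᵐ`. -/
def jacobian (D : Euc l →L[ℝ] Euc m) : ℝ :=
  Real.sqrt (LinearMap.det
    ((D.comp (ContinuousLinearMap.adjoint D) : Euc m →L[ℝ] Euc m) : Euc m →ₗ[ℝ] Euc m))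

/-- A transversal family of maps `(P_λ)_{λ ∈ Λ}` in the sense of Definition 3.4. -/
structure IsTransversalFamily (Λ : Set (Euc l)) (P : Euc n → Euc l → Euc m) : Prop where
  isOpen : IsOpen Λ
  isBounded : Bornology.IsBounded Λ
  continuousOn : ContinuousOn (fun q : Euc n × Euc l => P q.1 q.2) (Set.univ ×ˢ Λ)
  contDiffOn : ∀ x : Euc n, ContDiffOn ℝ 2 (P x) Λ
  derivBound : ∀ j : ℕ, j = 1 ∨ j = 2 → ∃ C : ℝ, ∀ x : Euc n, ∀ lam ∈ Λ,
    ‖iteratedFDeriv ℝ j (P x) lam‖ ≤ C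
  transversality : ∃ C' : ℝ, 0 < C' ∧ ∀ x x' : Euc n, x ≠ x' → ∀ lam ∈ Λ,
    ‖transMap P x x' lam‖ ≤ C' → C' ≤ jacobian (fderiv ℝ (transMap P x x') lam)
  transDerivBound : ∃ C'' : ℝ, ∀ x x' : Euc n, x ≠ x' → ∀ lam ∈ Λ,
    ‖fderiv ℝ (transMap P x x') lam‖ ≤ C'' ∧ ‖iteratedFDeriv ℝ 2 (transMap P x x') lam‖ ≤ C''

/-- The cone `X(a,λ,s)`. -/
def coneX (P : Euc n → Euc l → Euc m) (a : Euc n) (lam : Euc l) (s : ℝ) : Set (Euc n) :=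
  {x | ‖P x lam - P a lam‖ < s * ‖x - a‖}

/-- The truncated cone `X(a,r,λ,s)`. -/
def coneXr (P : Euc n → Euc l → Euc m) (a : Euc n) (r : ℝ) (lam : Euc l) (s : ℝ) :
    Set (Euc n) :=
  coneX P a lam s ∩ closedBall a r

/-- The cone `L_V(a,λ,s)`. -/
def coneL (P : Euc n → Euc l → Euc m) (V : Submodule ℝ (Euc l)) (a : Euc n) (lam : Euc l)
    (s : ℝ) : Set (Euc n) :=
  {x | ∃ lam' : Euc l, P x lam' = P a lam' ∧ ‖lam' - lam‖ < s ∧ lam' - lam ∈ V}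

/-- `V` is an `m`-dimensional coordinate plane of `ℝˡ`. -/
def IsCoordPlane (m : ℕ) (V : Submodule ℝ (Euc l)) : Prop :=
  ∃ I : Finset (Fin l), I.card = m ∧
    V = Submodule.span ℝ {v : Euc l | ∃ i ∈ I, v = EuclideanSpace.single i (1 : ℝ)}

/-- A countably `m`-rectifiable subset of `ℝⁿ`. -/
def CountablyRectifiable (m : ℕ) (R : Set (Euc n)) : Prop :=
  ∃ (E : ℕ → Set (Euc m)) (f : ℕ → Euc m → Euc n),
    (∀ i, Bornology.IsBounded (E i)) ∧
    (∀ i, ∃ K : ℝ≥0, LipschitzOnWith K (f i) (E i)) ∧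
    R = ⋃ i, f i '' E i

/-- An `m`-rectifiable measure: `μ = θ · (H^m ⌊ R)`. -/
def IsRectifiableMeasure (m : ℕ) (μ : Measure (Euc n)) : Prop :=
  ∃ (R : Set (Euc n)) (θ : Euc n → ℝ), CountablyRectifiable m R ∧ Measurable θ ∧
    μ = (μH[(m : ℝ)].restrict R).withDensity (fun x => ENNReal.ofReal (θ x))

/-- `S` is an `m`-dimensional `C¹` submanifold of `ℝⁿ`. -/
def IsC1Submanifold (m : ℕ) (S : Set (Euc n)) : Prop :=
  ∀ x ∈ S, ∃ (U : Set (Euc n)) (V : Set (Euc m)) (f : Euc m → Euc n),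
    IsOpen U ∧ x ∈ U ∧ IsOpen V ∧ ContDiffOn ℝ 1 f V ∧ Set.InjOn f V ∧
    (∀ y ∈ V, Function.Injective (fderivWithin ℝ f V y)) ∧ S ∩ U = f '' V

/-- `E` is purely `(φ,m)`-unrectifiable. -/
def PurelyUnrectifiable (m : ℕ) (φ : Measure (Euc n)) (E : Set (Euc n)) : Prop :=
  ∀ S : Set (Euc n), IsC1Submanifold m S → φ (S ∩ E) = 0

/-- `A` is countably `(φ,m)`-rectifiable. -/
def CountablyRectifiableWrt (m : ℕ) (φ : Measure (Euc n)) (A : Set (Euc n)) : Prop :=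
  ∃ R : Set (Euc n), CountablyRectifiable m R ∧ φ (A \ R) = 0

/-- Carathéodory's construction from a set function `ζ`, using countable Borel coverings. -/
def carath {X : Type*} [EMetricSpace X] [MeasurableSpace X] (ζ : Set X → ℝ≥0∞) (E : Set X) :
    ℝ≥0∞ :=
  ⨆ (δ : ℝ≥0∞) (_ : 0 < δ), ⨅ (G : ℕ → Set X) (_ : ∀ i, MeasurableSet (G i))
    (_ : E ⊆ ⋃ i, G i) (_ : ∀ i, EMetric.diam (G i) ≤ δ), ∑' i, ζ (G i)

/-- `L^p` norm of an `ℝ≥0∞`-valued function. -/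
def lpNormENN {α : Type*} [MeasurableSpace α] (ν : Measure α) (p : ℝ≥0∞) (f : α → ℝ≥0∞) :
    ℝ≥0∞ :=
  if p = ∞ then essSup f ν else (∫⁻ a, f a ^ p.toReal ∂ν) ^ (1 / p.toReal)

/-- The set function `ζ_p(B) = ‖λ ↦ μ_λ(B)‖_{L^p(Λ)}`. -/
def zetaP (Λ : Set (Euc l)) (μ : Euc l → Measure (Euc n)) (p : ℝ≥0∞) (B : Set (Euc n)) :
    ℝ≥0∞ :=
  lpNormENN (volume.restrict Λ) p (fun lam => μ lam B)

/-- The measure `𝓘^m_p` obtained from `ζ_p` via Carathéodory's construction. -/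
def genIGMeasure (Λ : Set (Euc l)) (μ : Euc l → Measure (Euc n)) (p : ℝ≥0∞) :
    Set (Euc n) → ℝ≥0∞ :=
  carath (zetaP Λ μ p)

/-- Upper Lebesgue integral. -/
def upperLintegral {α : Type*} [MeasurableSpace α] (ν : Measure α) (f : α → ℝ≥0∞) : ℝ≥0∞ :=
  ⨅ (g : α → ℝ≥0∞) (_ : Measurable g) (_ : ∀ a, f a ≤ g a), ∫⁻ a, g a ∂ν

/-- The set function `ζ̂(B') = ∫*_Λ μ_λ(B'_λ) dλ`. -/
def zetaHat (Λ : Set (Euc l)) (μ : Euc l → Measure (Euc n)) (B' : Set (Euc n × Euc l)) :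
    ℝ≥0∞ :=
  upperLintegral (volume.restrict Λ) (fun lam => μ lam {x | (x, lam) ∈ B'})

/-- The measure `𝓘̂_m` on the product, obtained from `ζ̂` via Carathéodory's construction. -/
def hatIG (Λ : Set (Euc l)) (μ : Euc l → Measure (Euc n)) : Set (Euc n × Euc l) → ℝ≥0∞ :=
  carath (zetaHat Λ μ)

/-- A measurable family of (Borel regular outer) measures. -/
def MeasurableFamily (Λ : Set (Euc l)) (μ : Euc l → Measure (Euc n)) : Prop :=
  ∀ B : Set (Euc n), MeasurableSet B → AEMeasurable (fun lam => μ lam B) (volume.restrict Λ)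

/-- `𝓘^m_p` is an integralgeometric measure (Definition 4.1). -/
def IsIntegralgeometric (Λ : Set (Euc l)) (P : Euc n → Euc l → Euc m)
    (μ : Euc l → Measure (Euc n)) : Prop :=
  (∀ᵐ lam ∂(volume.restrict Λ), (μ lam).map (fun x => P x lam) ≪ volume) ∧
  ∃ E : Set (Euc n), MeasurableSet E ∧
    (∀ᵐ lam ∂(volume.restrict Λ), μ lam Eᶜ = 0) ∧
    (∀ᵐ lam ∂(volume.restrict Λ), ∀ᵐ y ∂((μ lam).map (fun x => P x lam)),
      (E ∩ (fun x => P x lam) ⁻¹' {y}).Finite)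

/-- A disintegration `ν = η_y ⊗ Q_♯ν`. -/
def IsDisintegration {X Y : Type*} [MeasurableSpace X] [MeasurableSpace Y] (ν : Measure X)
    (Q : X → Y) (η : Y → Measure X) : Prop :=
  (∀ y, IsProbabilityMeasure (η y)) ∧
  (∀ᵐ y ∂(ν.map Q), η y (Q ⁻¹' {y})ᶜ = 0) ∧
  (∀ B : Set X, MeasurableSet B → Measurable fun y => η y B) ∧
  (∀ B : Set X, MeasurableSet B → ν B = ∫⁻ y, η y B ∂(ν.map Q))

/-- A `0`-rectifiable measure (a countable sum of nonnegative point masses). -/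
def ZeroRectifiable {X : Type*} [MeasurableSpace X] (ν : Measure X) : Prop :=
  ∃ R : Set X, R.Countable ∧ ν Rᶜ = 0

/-- A measure supported on a finite set. -/
def FinitelySupported {X : Type*} [MeasurableSpace X] (ν : Measure X) : Prop :=
  ∃ F : Set X, F.Finite ∧ ν Fᶜ = 0

/-- `ω(m)`, the Lebesgue measure of the unit ball of `ℝᵐ`. -/
def omegaBall (m : ℕ) : ℝ := (volume (Metric.ball (0 : Euc m) 1)).toReal

/-- The `m`-dimensional upper density `Θ^{*m}(ν, a)`. -/
def upperDensity (m : ℕ) (ν : Measure (Euc n)) (a : Euc n) : ℝ≥0∞ :=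
  Filter.limsup
    (fun r : ℝ => ν (closedBall a r) / ENNReal.ofReal (omegaBall m * r ^ m)) (𝓝[>] 0)

/-- `sup_{0<r<δ} (rs)^{-m} φ(E ∩ X(a,r,λ,s))`, then `limsup` as `s → 0⁺`. -/
def coneDensity (P : Euc n → Euc l → Euc m) (φ : Measure (Euc n)) (E : Set (Euc n))
    (a : Euc n) (lam : Euc l) (δ : ℝ) : ℝ≥0∞ :=
  Filter.limsup (fun s : ℝ =>
    ⨆ (r : ℝ) (_ : r ∈ Set.Ioo (0 : ℝ) δ),
      φ (E ∩ coneXr P a r lam s) / ENNReal.ofReal ((r * s) ^ m)) (𝓝[>] 0)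



/-- The Grassmannian of `m`-dimensional linear subspaces of `ℝⁿ`. -/
def Grassmannian (n m : ℕ) : Type :=
  {V : Submodule ℝ (Euc n) // Module.finrank ℝ V = m}

/-- The orthogonal projection `π_V : ℝⁿ → V ⊆ ℝⁿ`. -/
def projG {n m : ℕ} (V : Grassmannian n m) : Euc n →L[ℝ] Euc n :=
  (V.1.subtypeL).comp (Submodule.orthogonalProjectionOnto V.1)

instance {n m : ℕ} : TopologicalSpace (Grassmannian n m) :=
  TopologicalSpace.induced projG inferInstance

instance {n m : ℕ} : MeasurableSpace (Grassmannian n m) := borel _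

instance {n m : ℕ} : BorelSpace (Grassmannian n m) := ⟨rfl⟩

/-- The action of an orthogonal transformation on the Grassmannian. -/
def grMap {n m : ℕ} (g : Euc n ≃ₗᵢ[ℝ] Euc n) (V : Grassmannian n m) : Grassmannian n m :=
  ⟨V.1.map (g.toLinearEquiv : Euc n →ₗ[ℝ] Euc n), by
    rw [LinearEquiv.finrank_map_eq g.toLinearEquiv V.1]; exact V.2⟩

/-- A measure on the Grassmannian is invariant under the action of `O(n)`. -/
def IsONInvariant {n m : ℕ} (γ : Measure (Grassmannian n m)) : Prop :=
  ∀ g : Euc n ≃ₗᵢ[ℝ] Euc n, Measure.map (grMap g) γ = γ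

/-- `η_p(B) = ‖V ↦ H^m(π_V(B))‖_{L^p(γ)}`. -/
def etaP {n m : ℕ} (γ : Measure (Grassmannian n m)) (p : ℝ≥0∞) (B : Set (Euc n)) : ℝ≥0∞ :=
  lpNormENN γ p (fun V => μH[(m : ℝ)] (projG V '' B))

/-- Federer's integralgeometric measure `I^m_p`. -/
def IGMeasure {n m : ℕ} (γ : Measure (Grassmannian n m)) (p : ℝ≥0∞) :
    Set (Euc n) → ℝ≥0∞ :=
  carath (etaP γ p)

/-- `μ_V(B) = ∫_V H^0(B ∩ π_V⁻¹(y)) dH^m(y)`. -/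
def muV {n m : ℕ} (V : Grassmannian n m) (B : Set (Euc n)) : ℝ≥0∞ :=
  ∫⁻ y in (V.1 : Set (Euc n)), Measure.count (B ∩ projG V ⁻¹' {y}) ∂μH[(m : ℝ)]



/-- `ζ_p(B) = ‖V ↦ μ_V(B)‖_{L^p(γ)}` for the measures `μ_V`. -/
def zetaGr {n m : ℕ} (γ : Measure (Grassmannian n m)) (p : ℝ≥0∞) (B : Set (Euc n)) : ℝ≥0∞ :=
  lpNormENN γ p (fun V => muV V B)

/-- The measure `𝓘^m_p` obtained from `ζ_p` via Carathéodory's construction. -/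
def IGMeasureAlt {n m : ℕ} (γ : Measure (Grassmannian n m)) (p : ℝ≥0∞) :
    Set (Euc n) → ℝ≥0∞ :=
  carath (zetaGr γ p)

/-!
For `p = 1` the gauge `ζ₁(B) = ∫_Λ μ_λ(B) dλ` is, on Borel sets, a genuine measure: the mixture of
the `μ_λ`. Carathéodory's construction returns the outer measure of a measure `ν` on a separable
space, because every Borel set splits into countably many Borel pieces of arbitrarily small
diameter whose `ν`-masses add up to its own; this gives (i) and (iii).
For (ii), cut `B × U` into Borel rectangles of small diameter. On a rectangle `s × t` the slice
function `λ ↦ μ_λ(s) 1_t(λ)` is a.e. measurable, so its upper integral is an ordinary integral,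
and these integrals add up to `∫_U μ_λ(B) dλ` by additivity in `t` and then in `s`.
-/

theorem tsum_measure_inter_of_partition {X : Type*} [MeasurableSpace X] (ν : Measure X)
    {s : Set X} (hs : MeasurableSet s)
    {D : ℕ → Set X} (hD : ∀ i, MeasurableSet (D i)) (hdisj : Pairwise (Function.onFun Disjoint D))
    (hcover : ⋃ i, D i = univ) : ∑' i, ν (s ∩ D i) = ν s := by
  rw [← measure_iUnion (fun i j hij => (hdisj hij).mono inter_subset_right inter_subset_right)
    fun i => hs.inter (hD i), ← inter_iUnion, hcover, inter_univ]

theorem ediam_prod_le {X Y : Type*} [PseudoEMetricSpace X] [PseudoEMetricSpace Y]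
    (s : Set X) (t : Set Y) : ediam (s ×ˢ t) ≤ max (ediam s) (ediam t) :=
  ediam_le fun p hp q hq => by
    rw [Prod.edist_eq]
    exact max_le_max (edist_le_ediam_of_mem hp.1 hq.1) (edist_le_ediam_of_mem hp.2 hq.2)

section Carath

variable {X : Type*} [EMetricSpace X] [MeasurableSpace X]

theorem exists_measurable_partition_diam_le [TopologicalSpace.SeparableSpace X]
    [OpensMeasurableSpace X] {δ : ℝ≥0∞} (hδ : 0 < δ) :
    ∃ D : ℕ → Set X, (∀ i, MeasurableSet (D i)) ∧ Pairwise (Function.onFun Disjoint D) ∧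
      ⋃ i, D i = univ ∧ ∀ i, ediam (D i) ≤ δ := by
  rcases isEmpty_or_nonempty X with hX | hX
  · exact ⟨fun _ => ∅, fun _ => .empty, fun _ _ _ => disjoint_bot_left,
      eq_univ_of_forall hX.elim, fun _ => by simp⟩
  obtain ⟨u, hu⟩ := TopologicalSpace.exists_dense_seq X
  have hδ2 : 0 < δ / 2 := ENNReal.div_pos hδ.ne' ENNReal.ofNat_ne_top
  refine ⟨disjointed fun i => eball (u i) (δ / 2),
    .disjointed fun _ => isOpen_eball.measurableSet, disjoint_disjointed _, ?_,
    fun i => (ediam_mono (disjointed_subset _ i)).trans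
      (ediam_eball_le.trans ENNReal.mul_div_le)⟩
  rw [iUnion_disjointed, eq_univ_iff_forall]
  intro x
  obtain ⟨_, ⟨i, rfl⟩, hi⟩ := EMetric.mem_closure_iff.1 (hu x) _ hδ2
  exact mem_iUnion.2 ⟨i, mem_eball.2 hi⟩

theorem carath_le_of_forall_exists_cover {ι : Type*} [Denumerable ι] {ζ : Set X → ℝ≥0∞}
    {E : Set X} {c : ℝ≥0∞}
    (h : ∀ δ > 0, ∃ G : ι → Set X, (∀ i, MeasurableSet (G i)) ∧ E ⊆ ⋃ i, G i ∧
      (∀ i, ediam (G i) ≤ δ) ∧ ∑' i, ζ (G i) ≤ c) :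
    carath ζ E ≤ c := by
  refine iSup₂_le fun δ hδ => ?_
  obtain ⟨G, hGm, hEG, hGδ, hGc⟩ := h δ hδ
  let e := Denumerable.eqv ι
  refine iInf_le_of_le (G ∘ e.symm) <| iInf_le_of_le (fun k => hGm _) <|
    iInf_le_of_le ?_ <| iInf_le_of_le (fun k => hGδ _) ?_
  · rwa [Function.comp_def, e.symm.surjective.iUnion_comp G]
  · rwa [Function.comp_def, e.symm.tsum_eq fun i => ζ (G i)]

theorem le_carath_of_forall_cover {ζ : Set X → ℝ≥0∞} {E : Set X} {c : ℝ≥0∞}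
    (h : ∀ G : ℕ → Set X, (∀ i, MeasurableSet (G i)) → E ⊆ ⋃ i, G i → c ≤ ∑' i, ζ (G i)) :
    c ≤ carath ζ E :=
  le_iSup₂_of_le ⊤ ENNReal.zero_lt_top <|
    le_iInf₂ fun G hG => le_iInf₂ fun hEG _ => h G hG hEG

theorem carath_eq_measure [TopologicalSpace.SeparableSpace X] [OpensMeasurableSpace X]
    (ν : Measure X) {ζ : Set X → ℝ≥0∞} (hζ : ∀ B, MeasurableSet B → ζ B = ν B) (E : Set X) :
    carath ζ E = ν E := by
  refine le_antisymm (carath_le_of_forall_exists_cover (ι := ℕ) fun δ hδ => ?_)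
    (le_carath_of_forall_cover fun G hG hEG => ?_)
  · obtain ⟨D, hDm, hdisj, hcover, hDδ⟩ := exists_measurable_partition_diam_le (X := X) hδ
    let T := toMeasurable ν E
    have hT : MeasurableSet T := measurableSet_toMeasurable ν E
    refine ⟨fun i => T ∩ D i, fun i => hT.inter (hDm i), ?_,
      fun i => (ediam_mono inter_subset_right).trans (hDδ i), ?_⟩
    · rw [← inter_iUnion, hcover, inter_univ]
      exact subset_toMeasurable ν E
    · rw [tsum_congr fun i => hζ _ (hT.inter (hDm i)),
        tsum_measure_inter_of_partition ν hT hDm hdisj hcover, measure_toMeasurable]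
  · calc ν E ≤ ν (⋃ i, G i) := measure_mono hEG
      _ ≤ ∑' i, ν (G i) := measure_iUnion_le G
      _ = ∑' i, ζ (G i) := by simp only [hζ _ (hG _)]

end Carath

section Mixture

variable {X Y : Type*} [MeasurableSpace X] [MeasurableSpace Y]

def mixture (ν : Measure Y) (μ : Y → Measure X)
    (hμ : ∀ B, MeasurableSet B → AEMeasurable (fun y => μ y B) ν) : Measure X :=
  Measure.ofMeasurable (fun B _ => ∫⁻ y, μ y B ∂ν) (by simp) fun B hB hdisj => by
    simp_rw [measure_iUnion hdisj hB]
    exact lintegral_tsum fun i => hμ _ (hB i)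

variable {ν : Measure Y} {μ : Y → Measure X}
  {hμ : ∀ B, MeasurableSet B → AEMeasurable (fun y => μ y B) ν}

theorem mixture_apply {B : Set X} (hB : MeasurableSet B) :
    mixture ν μ hμ B = ∫⁻ y, μ y B ∂ν :=
  Measure.ofMeasurable_apply B hB

theorem mixture_eq_iInf (E : Set X) :
    mixture ν μ hμ E = ⨅ (B : Set X) (_ : MeasurableSet B) (_ : E ⊆ B), ∫⁻ y, μ y B ∂ν := by
  rw [measure_eq_iInf]
  refine iInf_congr fun B => ?_
  rw [iInf_comm]
  exact iInf_congr fun hB => iInf_congr fun _ => mixture_apply hB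

end Mixture

theorem upperLintegral_le_lintegral {α : Type*} [MeasurableSpace α] {ν : Measure α}
    {f : α → ℝ≥0∞} (hf : AEMeasurable f ν) : upperLintegral ν f ≤ ∫⁻ a, f a ∂ν := by
  classical
  let T := toMeasurable ν {a | f a ≠ hf.mk f a}
  have hT : MeasurableSet T := measurableSet_toMeasurable _ _
  have hT0 : ν T = 0 := by rw [measure_toMeasurable]; exact ae_iff.1 hf.ae_eq_mk
  let g := T.piecewise (fun _ => ∞) (hf.mk f)
  have hfg : ∀ a, f a ≤ g a := fun a => by
    by_cases ha : a ∈ T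
    · simp [g, ha]
    · simpa [g, ha] using (not_not.1 fun h => ha (subset_toMeasurable _ _ h)).le
  have hgf : g =ᵐ[ν] f := by
    filter_upwards [measure_eq_zero_iff_ae_notMem.1 hT0, hf.ae_eq_mk] with a ha hfa
    simp [g, ha, hfa]
  exact iInf₂_le_of_le g (measurable_const.piecewise hT hf.measurable_mk) <|
    iInf_le_of_le hfg (lintegral_congr_ae hgf).le

theorem zetaP_one (Λ : Set (Euc l)) (μ : Euc l → Measure (Euc n)) (B : Set (Euc n)) :
    zetaP Λ μ 1 B = ∫⁻ lam in Λ, μ lam B := by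
  simp [zetaP, lpNormENN]

theorem genIGMeasure_one_eq_mixture {Λ : Set (Euc l)} {μ : Euc l → Measure (Euc n)}
    (hμ : MeasurableFamily Λ μ) (E : Set (Euc n)) :
    genIGMeasure Λ μ 1 E = mixture (volume.restrict Λ) μ hμ E :=
  carath_eq_measure _ (fun B hB => (zetaP_one Λ μ B).trans (mixture_apply hB).symm) E

theorem zetaHat_prod_le {Λ : Set (Euc l)} {μ : Euc l → Measure (Euc n)} {s : Set (Euc n)}
    {t : Set (Euc l)} (hs : AEMeasurable (fun lam => μ lam s) (volume.restrict Λ))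
    (ht : MeasurableSet t) (htΛ : t ⊆ Λ) :
    zetaHat Λ μ (s ×ˢ t) ≤ ∫⁻ lam in t, μ lam s := by
  have hslice : (fun lam => μ lam {x | (x, lam) ∈ s ×ˢ t}) = t.indicator fun lam => μ lam s := by
    ext lam
    by_cases hlam : lam ∈ t <;> simp [hlam]
  rw [zetaHat, hslice]
  refine (upperLintegral_le_lintegral (hs.indicator ht)).trans_eq ?_
  rw [lintegral_indicator ht, Measure.restrict_restrict ht, inter_eq_left.2 htΛ]

theorem hatIG_prod_le {Λ : Set (Euc l)} {μ : Euc l → Measure (Euc n)}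
    (hμ : MeasurableFamily Λ μ) {s : Set (Euc n)} (hs : MeasurableSet s) {t : Set (Euc l)}
    (ht : MeasurableSet t) (htΛ : t ⊆ Λ) :
    hatIG Λ μ (s ×ˢ t) ≤ ∫⁻ lam in t, μ lam s := by
  have hμt : MeasurableFamily t μ := fun B hB =>
    (hμ B hB).mono_measure (Measure.restrict_mono htΛ le_rfl)
  refine carath_le_of_forall_exists_cover (ι := ℕ × ℕ) fun δ hδ => ?_
  obtain ⟨D, hDm, hD, hDu, hDδ⟩ := exists_measurable_partition_diam_le (X := Euc n) hδ
  obtain ⟨D', hD'm, hD', hD'u, hD'δ⟩ := exists_measurable_partition_diam_le (X := Euc l) hδ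
  refine ⟨fun p => (s ∩ D p.1) ×ˢ (t ∩ D' p.2),
    fun p => (hs.inter (hDm p.1)).prod (ht.inter (hD'm p.2)), ?_, fun p => ?_, ?_⟩
  · rintro ⟨x, lam⟩ ⟨hx, hlam⟩
    obtain ⟨i, hi⟩ := mem_iUnion.1 (hDu ▸ mem_univ x)
    obtain ⟨j, hj⟩ := mem_iUnion.1 (hD'u ▸ mem_univ lam)
    exact mem_iUnion.2 ⟨(i, j), ⟨hx, hi⟩, hlam, hj⟩
  · exact (ediam_prod_le _ _).trans <| max_le
      ((ediam_mono inter_subset_right).trans (hDδ _))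
      ((ediam_mono inter_subset_right).trans (hD'δ _))
  · calc ∑' p : ℕ × ℕ, zetaHat Λ μ ((s ∩ D p.1) ×ˢ (t ∩ D' p.2))
        ≤ ∑' p : ℕ × ℕ, ∫⁻ lam in t ∩ D' p.2, μ lam (s ∩ D p.1) :=
          ENNReal.tsum_le_tsum fun p => zetaHat_prod_le (hμ _ (hs.inter (hDm p.1)))
            (ht.inter (hD'm p.2)) (inter_subset_left.trans htΛ)
      _ = ∑' i, ∫⁻ lam in t, μ lam (s ∩ D i) := by
          rw [ENNReal.tsum_prod (f := fun i j => ∫⁻ lam in t ∩ D' j, μ lam (s ∩ D i))]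
          refine tsum_congr fun i => ?_
          simp_rw [← withDensity_apply _ (ht.inter (hD'm _)), ← withDensity_apply _ ht]
          exact tsum_measure_inter_of_partition _ ht hD'm hD' hD'u
      _ = ∫⁻ lam in t, μ lam s := by
          simp_rw [← mixture_apply (hμ := hμt) (hs.inter (hDm _)), ← mixture_apply (hμ := hμt) hs]
          exact tsum_measure_inter_of_partition _ hs hDm hD hDu

theorem genIGMeasure_one_identities_general
    {n l : ℕ} (Λ : Set (Euc l))
    (μ : Euc l → Measure (Euc n)) (hμ : MeasurableFamily Λ μ) :
    (∀ E : Set (Euc n), genIGMeasure Λ μ 1 E =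
        ⨅ (B : Set (Euc n)) (_ : MeasurableSet B) (_ : E ⊆ B), ∫⁻ lam in Λ, μ lam B) ∧
    (∀ B : Set (Euc n), MeasurableSet B → ∀ U : Set (Euc l), MeasurableSet U → U ⊆ Λ →
        hatIG Λ μ (B ×ˢ U) ≤ ∫⁻ lam in U, μ lam B) ∧
    (∀ B : Set (Euc n), MeasurableSet B →
        genIGMeasure Λ μ 1 B = zetaP Λ μ 1 B ∧
        genIGMeasure Λ μ 1 B = ∫⁻ lam in Λ, μ lam B) := by
  have hBorel : ∀ B, MeasurableSet B → genIGMeasure Λ μ 1 B = ∫⁻ lam in Λ, μ lam B :=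
    fun B hB => (genIGMeasure_one_eq_mixture hμ B).trans (mixture_apply hB)
  exact ⟨fun E => (genIGMeasure_one_eq_mixture hμ E).trans (mixture_eq_iInf E),
    fun B hB U hU hUΛ => hatIG_prod_le hμ hB hU hUΛ,
    fun B hB => ⟨(hBorel B hB).trans (zetaP_one Λ μ B).symm, hBorel B hB⟩⟩

/-- Proposition 4.3: basic identities for `𝓘^m_1` and `𝓘̂_m`. -/
theorem genIGMeasure_one_identities
    {n l : ℕ} (hn : 1 ≤ n)
    (Λ : Set (Euc l)) (hΛo : IsOpen Λ) (hΛb : Bornology.IsBounded Λ)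
    (μ : Euc l → Measure (Euc n)) (hμ : MeasurableFamily Λ μ) :
    (∀ E : Set (Euc n), genIGMeasure Λ μ 1 E =
        ⨅ (B : Set (Euc n)) (_ : MeasurableSet B) (_ : E ⊆ B), ∫⁻ lam in Λ, μ lam B) ∧
    (∀ B : Set (Euc n), MeasurableSet B → ∀ U : Set (Euc l), MeasurableSet U → U ⊆ Λ →
        hatIG Λ μ (B ×ˢ U) ≤ ∫⁻ lam in U, μ lam B) ∧
    (∀ B : Set (Euc n), MeasurableSet B →
        genIGMeasure Λ μ 1 B = zetaP Λ μ 1 B ∧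
        genIGMeasure Λ μ 1 B = ∫⁻ lam in Λ, μ lam B) :=
  genIGMeasure_one_identities_general Λ μ hμ

end Slicing
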